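/- arXiv:1602.02142 — 2 statements merged into one kernel-verified Lean document; each statement's English description precedes it below -/
import Mathlib

section
/- Suppose for all finite A ⊆ F_p and X ⊆ F_p \ {0} with |A|²|X| ≤ p², one has ∑_{x ∈ X} E_+(A, xA) ≤ C(|A|³|X|^{3/4} + |A|^{5/2}|X|) for an absolute constant C. Then for any such A, and any K satisfying K ≤ (p/|A|)·c₁ and K ≤ c₂|A|^{1/2} for suitable absolute constants c₁, c₂ > 0 (depending on C), the set X = {ξ ∈ F_p \ {0} : E_+(A, ξA) > |A|³/K} has size at most C'K⁴ for an absolute constant C'. -/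
open Finset

/-- `E₊(A, ξA)`: number of quadruples `(a₁,a₂,a₃,a₄) ∈ A⁴` with `a₁ - a₂ = ξ(a₃ - a₄)`. -/
def addEnergy {p : ℕ} (A : Finset (ZMod p)) (ξ : ZMod p) : ℕ :=
  ((A ×ˢ A ×ˢ A ×ˢ A).filter
    (fun q => q.1 - q.2.1 = ξ * (q.2.2.1 - q.2.2.2))).card

/-!
Cauchy–Schwarz over the fibres of `(a, b) ↦ a - ξ * b` gives `E₊(A, ξA) ≥ |A|⁴ / p`, and counting,
for each quadruple, the dilates `ξ` it solves gives `∑_ξ E₊(A, ξA) ≤ |A|⁴ + p|A|²`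
(Bourgain–Katz–Tao). As `2K|A| ≤ p`, the mean `|A|⁴ / p` is at most half the threshold `|A|³ / K`,
so summing the excesses over the rich set `X` gives `|X||A|³ ≤ 2Kp|A|²`, hence `|A|²|X| ≤ p²` and
the assumed energy bound applies to `X`. Since `2CK ≤ |A|^(1/2)`, its term `C|A|^(5/2)|X|` is
absorbed by half of `|X||A|³ / K`, leaving `|X| ≤ 2CK|X|^(3/4)`, i.e. `|X| ≤ (2CK)⁴`.
-/

lemma card_filter_eq_eq_sum_sq {α β : Type*} [Fintype β] [DecidableEq β]
    (s : Finset α) (f : α → β) :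
    #{x ∈ s ×ˢ s | f x.1 = f x.2} = ∑ b, #{a ∈ s | f a = b} ^ 2 := by
  rw [card_eq_sum_card_fiberwise (f := fun x => f x.1) (t := univ) fun _ _ => mem_univ _]
  refine sum_congr rfl fun b _ => ?_
  rw [filter_filter, sq, ← card_product]
  congr 1
  ext ⟨x, y⟩
  simp only [mem_filter, mem_product]
  constructor
  · rintro ⟨⟨hx, hy⟩, hxy, rfl⟩; exact ⟨⟨hx, rfl⟩, hy, hxy.symm⟩
  · rintro ⟨⟨hx, rfl⟩, hy, hxy⟩; exact ⟨⟨hx, hy⟩, hxy.symm, rfl⟩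

lemma sq_card_le_card_mul_card_filter_eq {α β : Type*} [Fintype β] [DecidableEq β]
    (s : Finset α) (f : α → β) :
    #s ^ 2 ≤ Fintype.card β * #{x ∈ s ×ˢ s | f x.1 = f x.2} := by
  rw [card_filter_eq_eq_sum_sq, card_eq_sum_card_fiberwise (f := f) (t := univ)
    fun _ _ => mem_univ _]
  exact sq_sum_le_card_mul_sum_sq

lemma card_filter_eq_mul_le {F : Type*} [MulZeroClass F] [IsRightCancelMulZero F] [Fintype F]
    [DecidableEq F] (a b : F) :
    #{ξ | a = ξ * b} ≤ if a = 0 ∧ b = 0 then Fintype.card F else 1 := by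
  split_ifs with h
  · exact card_le_univ _
  · refine card_le_one.2 fun ξ hξ ξ' hξ' => ?_
    simp only [mem_filter, mem_univ, true_and] at hξ hξ'
    have hb : b ≠ 0 := by rintro rfl; simp_all
    exact mul_right_cancel₀ hb (hξ.symm.trans hξ')

section

variable {p : ℕ}

lemma addEnergy_eq_card_filter (A : Finset (ZMod p)) (ξ : ZMod p) :
    addEnergy A ξ =
      #{x ∈ (A ×ˢ A) ×ˢ (A ×ˢ A) | x.1.1 - ξ * x.1.2 = x.2.1 - ξ * x.2.2} := by
  refine card_nbij' (fun q => ((q.1, q.2.2.1), (q.2.1, q.2.2.2)))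
    (fun x => (x.1.1, x.2.1, x.1.2, x.2.2)) ?_ ?_ (fun _ _ => rfl) (fun _ _ => rfl)
  · rintro ⟨a, b, c, d⟩
    simp only [coe_filter, mem_product, Set.mem_ofPred_eq]
    rintro ⟨⟨ha, hb, hc, hd⟩, h⟩
    exact ⟨⟨⟨ha, hc⟩, hb, hd⟩, by linear_combination h⟩
  · rintro ⟨⟨a, c⟩, b, d⟩
    simp only [coe_filter, mem_product, Set.mem_ofPred_eq]
    rintro ⟨⟨⟨ha, hc⟩, hb, hd⟩, h⟩
    exact ⟨⟨ha, hb, hc, hd⟩, by linear_combination h⟩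

lemma card_pow_four_le_mul_addEnergy [NeZero p] (A : Finset (ZMod p)) (ξ : ZMod p) :
    #A ^ 4 ≤ p * addEnergy A ξ := by
  have h := sq_card_le_card_mul_card_filter_eq (A ×ˢ A) fun x => x.1 - ξ * x.2
  rwa [card_product, ZMod.card, ← addEnergy_eq_card_filter, ← sq, ← pow_mul] at h

lemma sum_addEnergy_le [Fact p.Prime] (A : Finset (ZMod p)) :
    ∑ ξ : ZMod p, addEnergy A ξ ≤ #A ^ 4 + p * #A ^ 2 := by
  set Q := A ×ˢ A ×ˢ A ×ˢ A
  have hdiag : #{q ∈ Q | q.1 - q.2.1 = 0 ∧ q.2.2.1 - q.2.2.2 = 0} ≤ #A ^ 2 := by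
    rw [sq, ← card_product]
    refine card_le_card_of_injOn (fun q : ZMod p × ZMod p × ZMod p × ZMod p => (q.1, q.2.2.1))
      (fun q hq => ?_) fun q hq q' hq' h => ?_
    · simp only [Q, coe_filter, mem_product, Set.mem_ofPred_eq] at hq
      exact mem_product.2 ⟨hq.1.1, hq.1.2.2.1⟩
    · simp only [Q, coe_filter, mem_product, Set.mem_ofPred_eq, sub_eq_zero] at hq hq'
      simp only [Prod.mk.injEq] at h
      ext <;> simp_all
  calc ∑ ξ : ZMod p, addEnergy A ξ
      = ∑ q ∈ Q, #{ξ : ZMod p | q.1 - q.2.1 = ξ * (q.2.2.1 - q.2.2.2)} :=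
        sum_card_bipartiteAbove_eq_sum_card_bipartiteBelow _
    _ ≤ ∑ q ∈ Q, if q.1 - q.2.1 = 0 ∧ q.2.2.1 - q.2.2.2 = 0 then p else 1 := by
        gcongr with q
        simpa only [ZMod.card] using card_filter_eq_mul_le (F := ZMod p) _ _
    _ ≤ #A ^ 4 + p * #A ^ 2 := by
        rw [sum_ite, sum_const, sum_const, smul_eq_mul, smul_eq_mul, mul_one]
        have hQ : #Q = #A ^ 4 := by simp only [Q, card_product]; ring
        have := card_filter_le Q fun q => ¬(q.1 - q.2.1 = 0 ∧ q.2.2.1 - q.2.2.2 = 0)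
        nlinarith [Nat.mul_le_mul_right p hdiag]

lemma card_mul_pow_three_le_of_lt_addEnergy [Fact p.Prime] {A X : Finset (ZMod p)} {K : ℝ}
    (hK : 0 < K) (hKp : 2 * K * #A ≤ p) (hX : ∀ ξ ∈ X, (#A : ℝ) ^ 3 / K < addEnergy A ξ) :
    (#X : ℝ) * #A ^ 3 ≤ 2 * K * p * #A ^ 2 := by
  have hp : (0 : ℝ) < p := Nat.cast_pos.2 (Fact.out : p.Prime).pos
  have hmean (ξ : ZMod p) : (#A : ℝ) ^ 4 / p ≤ addEnergy A ξ := by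
    rw [div_le_iff₀' hp]
    exact_mod_cast card_pow_four_le_mul_addEnergy A ξ
  have hgap : ∀ ξ ∈ X, (#A : ℝ) ^ 3 / (2 * K) ≤ addEnergy A ξ - #A ^ 4 / p := by
    intro ξ hξ
    have hmean_le : (#A : ℝ) ^ 4 / p ≤ #A ^ 3 / (2 * K) := by
      rw [div_le_div_iff₀ hp (by positivity)]
      nlinarith [mul_le_mul_of_nonneg_right hKp (by positivity : (0 : ℝ) ≤ #A ^ 3)]
    have hrich := hX ξ hξ
    have hhalves : (#A : ℝ) ^ 3 / K = #A ^ 3 / (2 * K) + #A ^ 3 / (2 * K) := by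
      field_simp; ring
    linarith
  have hsum : (∑ ξ : ZMod p, (addEnergy A ξ : ℝ)) ≤ #A ^ 4 + p * #A ^ 2 :=
    mod_cast sum_addEnergy_le A
  have hdiv : (#X : ℝ) * (#A ^ 3 / (2 * K)) ≤ p * #A ^ 2 :=
    calc (#X : ℝ) * (#A ^ 3 / (2 * K))
        ≤ ∑ ξ ∈ X, ((addEnergy A ξ : ℝ) - #A ^ 4 / p) := by
          simpa only [nsmul_eq_mul] using card_nsmul_le_sum X _ _ hgap
      _ ≤ ∑ ξ : ZMod p, ((addEnergy A ξ : ℝ) - #A ^ 4 / p) :=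
          sum_le_sum_of_subset_of_nonneg (subset_univ X) fun ξ _ _ => sub_nonneg.2 (hmean ξ)
      _ = (∑ ξ : ZMod p, (addEnergy A ξ : ℝ)) - #A ^ 4 := by
          rw [sum_sub_distrib, sum_const, card_univ, ZMod.card, nsmul_eq_mul,
            mul_div_cancel₀ _ hp.ne']
      _ ≤ p * #A ^ 2 := by linarith
  rw [mul_div_assoc', div_le_iff₀ (by positivity)] at hdiv
  linarith

lemma sq_card_mul_card_le_sq_of_lt_addEnergy [Fact p.Prime] {A X : Finset (ZMod p)} {K : ℝ}
    (hK : 0 < K) (hKp : 2 * K * #A ≤ p) (hX : ∀ ξ ∈ X, (#A : ℝ) ^ 3 / K < addEnergy A ξ) :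
    (#A : ℝ) ^ 2 * #X ≤ p ^ 2 := by
  have h := card_mul_pow_three_le_of_lt_addEnergy hK hKp hX
  rcases (Nat.cast_nonneg #A : (0 : ℝ) ≤ #A).eq_or_lt with ha | ha
  · rw [← ha, zero_pow two_ne_zero, zero_mul]; positivity
  have hXA : (#X : ℝ) * #A ≤ 2 * K * p := by
    refine le_of_mul_le_mul_right ?_ (pow_pos ha 2)
    linarith
  nlinarith

end

lemma rpow_one_sub_le_of_le_mul_rpow {x b θ : ℝ} (hx : 0 ≤ x) (hb : 0 ≤ b) (hθ : θ < 1)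
    (h : x ≤ b * x ^ θ) : x ^ (1 - θ) ≤ b := by
  rcases hx.eq_or_lt with rfl | hx
  · rwa [Real.zero_rpow (by linarith)]
  rwa [Real.rpow_sub hx, Real.rpow_one, div_le_iff₀ (Real.rpow_pos_of_pos hx θ)]

lemma le_pow_four_of_mul_div_le {C K a x : ℝ} (hC : 0 < C) (hK : 0 < K) (ha : 0 < a)
    (hx : 0 ≤ x) (hCK : 2 * C * K ≤ a ^ (1 / 2 : ℝ))
    (h : x * (a ^ 3 / K) ≤ C * (a ^ 3 * x ^ (3 / 4 : ℝ) + a ^ (5 / 2 : ℝ) * x)) :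
    x ≤ (2 * C * K) ^ 4 := by
  have ha3 : a ^ (5 / 2 : ℝ) * a ^ (1 / 2 : ℝ) = a ^ 3 := by
    rw [← Real.rpow_add ha]; norm_num
  have hsmall : C * a ^ (5 / 2 : ℝ) * (2 * K) ≤ a ^ 3 := by
    rw [← ha3]; nlinarith [Real.rpow_pos_of_pos ha (5 / 2)]
  have hmain : x ≤ 2 * C * K * x ^ (3 / 4 : ℝ) := by
    have h2K := mul_le_mul_of_nonneg_right h (by positivity : (0 : ℝ) ≤ 2 * K)
    have hcancel : x * (a ^ 3 / K) * (2 * K) = 2 * (x * a ^ 3) := by field_simp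
    have := mul_le_mul_of_nonneg_left hsmall hx
    refine le_of_mul_le_mul_right ?_ (pow_pos ha 3)
    nlinarith
  have h14 := rpow_one_sub_le_of_le_mul_rpow hx (by positivity) (by norm_num) hmain
  rw [show (1 - 3 / 4 : ℝ) = (4 : ℝ)⁻¹ by norm_num,
    Real.rpow_inv_le_iff_of_pos hx (by positivity) (by norm_num)] at h14
  exact_mod_cast h14

theorem stmt7 (C : ℝ) (hC : 0 < C) :
    ∃ c₁ c₂ C' : ℝ, 0 < c₁ ∧ 0 < c₂ ∧ 0 < C' ∧
      ∀ (p : ℕ) [Fact p.Prime] (A : Finset (ZMod p)), A.Nonempty →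
        (∀ (A' X' : Finset (ZMod p)), (∀ x ∈ X', x ≠ 0) →
            (A'.card : ℝ) ^ 2 * X'.card ≤ (p : ℝ) ^ 2 →
            (∑ x ∈ X', (addEnergy A' x : ℝ)) ≤
              C * ((A'.card : ℝ) ^ 3 * (X'.card : ℝ) ^ ((3 : ℝ) / 4) +
                   (A'.card : ℝ) ^ ((5 : ℝ) / 2) * X'.card)) →
        ∀ K : ℝ, 1 ≤ K → K * A.card ≤ c₁ * p →
          K ≤ c₂ * (A.card : ℝ) ^ ((1 : ℝ) / 2) →
          ((((univ : Finset (ZMod p)).filter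
              (fun ξ : ZMod p => ξ ≠ 0 ∧
                (A.card : ℝ) ^ 3 / K < (addEnergy A ξ : ℝ))).card : ℝ)
            ≤ C' * K ^ 4) := by
  refine ⟨1 / 2, 1 / (2 * C), 16 * C ^ 4, by norm_num, by positivity, by positivity, ?_⟩
  intro p _ A hA hbound K hK hKp hKA
  set X := (univ : Finset (ZMod p)).filter
    fun ξ : ZMod p => ξ ≠ 0 ∧ (#A : ℝ) ^ 3 / K < addEnergy A ξ
  have hK0 : 0 < K := by linarith
  have hrich : ∀ ξ ∈ X, (#A : ℝ) ^ 3 / K < addEnergy A ξ := fun ξ hξ => (mem_filter.1 hξ).2.2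
  have hXp := sq_card_mul_card_le_sq_of_lt_addEnergy hK0 (by linarith) hrich
  have hsum := hbound A X (fun ξ hξ => (mem_filter.1 hξ).2.1) hXp
  have hlow : (#X : ℝ) * (#A ^ 3 / K) ≤ ∑ ξ ∈ X, (addEnergy A ξ : ℝ) := by
    simpa only [nsmul_eq_mul] using card_nsmul_le_sum X _ _ fun ξ hξ => (hrich ξ hξ).le
  have hCK : 2 * C * K ≤ (#A : ℝ) ^ (1 / 2 : ℝ) := by
    rw [div_mul_eq_mul_div, one_mul, le_div_iff₀' (by positivity)] at hKA
    linarith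
  calc (#X : ℝ) ≤ (2 * C * K) ^ 4 :=
        le_pow_four_of_mul_div_le hC hK0 (by simpa using hA.card_pos) (by positivity) hCK
          (hlow.trans hsum)
    _ = 16 * C ^ 4 * K ^ 4 := by ring
end

section
/- Let A ⊆ F_p and let B, C, D each be translates of nonzero dilates of A. Then the number of solutions to (a−b)(c−d) = (a′−b′)(c′−d′) with a,a′ ∈ A, b,b′ ∈ B, c,c′ ∈ C, d,d′ ∈ D is at most 8|A|⁶ + ∑_{ξ ≠ 0} E_+(A, ξA)². -/
/-!
Split the solutions according to whether the common value of the two products vanishes. If it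
does, each side has a repeated coordinate, which leaves at most `2|A|³` choices per side. If it is
nonzero, put `ξ = (a - b)/(a' - b')`; then `a - b = ξ(a' - b')` and `c' - d' = ξ(c - d)`, so the
solutions with ratio `ξ` inject into a product of two mixed energies `E(A, B; ξ) · E(C, D; ξ)`.
Each mixed energy is an inner product of two representation functions, so by Cauchy–Schwarz it is
at most `√(E₊(A, ξA) E₊(B, ξB))`, and `E₊` is invariant under translating and dilating the set.
-/

open Finset

section CommRing

variable {K : Type*} [CommRing K] [DecidableEq K]

/-- The paper's `E₊(A, ξA)`, i.e. `addEnergy A ξ`, is `mixedEnergy A A A A ξ`. -/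
def mixedEnergy (W X Y Z : Finset K) (ξ : K) : ℕ :=
  #{q ∈ W ×ˢ X ×ˢ Y ×ˢ Z | q.1 - q.2.1 = ξ * (q.2.2.1 - q.2.2.2)}

def diffProd (t : K × K × K × K) : K :=
  (t.1 - t.2.1) * (t.2.2.1 - t.2.2.2)

def diffRepr (X Y : Finset K) (ξ v : K) : ℕ :=
  #{t ∈ X ×ˢ Y | t.1 - ξ * t.2 = v}

lemma mixedEnergy_eq_sum_diffRepr [Fintype K] (W X Y Z : Finset K) (ξ : K) :
    mixedEnergy W X Y Z ξ = ∑ v, diffRepr W Y ξ v * diffRepr X Z ξ v := by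
  have hrearrange : ∀ q : K × K × K × K, q.1 - q.2.1 = ξ * (q.2.2.1 - q.2.2.2) ↔
      q.1 - ξ * q.2.2.1 = q.2.1 - ξ * q.2.2.2 := fun q => by
    constructor <;> intro h <;> linear_combination h
  rw [mixedEnergy, filter_congr fun q _ => hrearrange q,
    card_eq_sum_card_fiberwise (f := fun q => q.1 - ξ * q.2.2.1) fun q _ => mem_coe.2 (mem_univ _)]
  refine sum_congr rfl fun v _ => ?_
  rw [diffRepr, diffRepr, ← card_product]
  refine card_nbij' (fun q => ((q.1, q.2.2.1), (q.2.1, q.2.2.2)))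
    (fun t => (t.1.1, t.2.1, t.1.2, t.2.2)) ?_ ?_ (fun _ _ => rfl) (fun _ _ => rfl)
  · rintro ⟨w, x, y, z⟩ hq
    simp only [mem_coe, mem_filter, mem_product] at hq ⊢
    obtain ⟨⟨⟨hw, hx, hy, hz⟩, heq⟩, rfl⟩ := hq
    exact ⟨⟨⟨hw, hy⟩, rfl⟩, ⟨hx, hz⟩, heq.symm⟩
  · rintro ⟨⟨w, y⟩, x, z⟩ ht
    simp only [mem_coe, mem_filter, mem_product] at ht ⊢
    obtain ⟨⟨⟨hw, hy⟩, rfl⟩, ⟨hx, hz⟩, heq⟩ := ht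
    exact ⟨⟨⟨hw, hx, hy, hz⟩, heq.symm⟩, rfl⟩

lemma mixedEnergy_sq_le [Fintype K] (W X : Finset K) (ξ : K) :
    mixedEnergy W X W X ξ ^ 2 ≤ mixedEnergy W W W W ξ * mixedEnergy X X X X ξ := by
  simp only [mixedEnergy_eq_sum_diffRepr, ← sq]
  exact sum_mul_sq_le_sq_mul_sq _ _ _

end CommRing

lemma card_diffProd_eq_zero_le {K : Type*} [CommRing K] [NoZeroDivisors K] [DecidableEq K]
    (W X Y Z : Finset K) :
    #{t ∈ W ×ˢ X ×ˢ Y ×ˢ Z | diffProd t = 0}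
      ≤ #W * #Y * #Z + #W * #X * #Y := by
  simp only [diffProd, mul_eq_zero, sub_eq_zero, filter_or]
  refine (card_union_le _ _).trans (add_le_add ?_ ?_)
  · calc _ ≤ #(W ×ˢ Y ×ˢ Z) := card_le_card_of_injOn (fun t => (t.1, t.2.2)) ?_ ?_
      _ = #W * #Y * #Z := by simp only [card_product, mul_assoc]
    · rintro ⟨w, x, y, z⟩ ht
      simp only [mem_coe, mem_filter, mem_product] at ht ⊢
      exact ⟨ht.1.1, ht.1.2.2⟩
    · rintro ⟨w, x, y, z⟩ ht ⟨w', x', y', z'⟩ ht' h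
      simp only [mem_coe, mem_filter, mem_product, Prod.mk.injEq] at ht ht' h ⊢
      exact ⟨h.1, ht.2 ▸ ht'.2 ▸ h.1, h.2⟩
  · calc _ ≤ #(W ×ˢ X ×ˢ Y) := card_le_card_of_injOn (fun t => (t.1, t.2.1, t.2.2.1)) ?_ ?_
      _ = #W * #X * #Y := by simp only [card_product, mul_assoc]
    · rintro ⟨w, x, y, z⟩ ht
      simp only [mem_coe, mem_filter, mem_product] at ht ⊢
      exact ⟨ht.1.1, ht.1.2.1, ht.1.2.2.1⟩
    · rintro ⟨w, x, y, z⟩ ht ⟨w', x', y', z'⟩ ht' h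
      simp only [mem_coe, mem_filter, mem_product, Prod.mk.injEq] at ht ht' h ⊢
      exact ⟨h.1, h.2.1, h.2.2, ht.2 ▸ ht'.2 ▸ h.2.2⟩

lemma card_filter_fiber_sq {α β : Type*} [DecidableEq β] (s : Finset α) (f : α → β) (b : β) :
    #{q ∈ {q ∈ s ×ˢ s | f q.1 = f q.2} | f q.1 = b} = #{x ∈ s | f x = b} ^ 2 := by
  rw [sq, ← card_product, ← filter_product, filter_filter]
  congr 1
  refine filter_congr fun q _ => ?_
  constructor
  · rintro ⟨heq, rfl⟩
    exact ⟨rfl, heq.symm⟩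
  · rintro ⟨h1, h2⟩
    exact ⟨h1.trans h2.symm, h1⟩

section Field

variable {K : Type*} [Field K] [DecidableEq K]

lemma mixedEnergy_image_affine (W X Y Z : Finset K) (ξ c : K) {lam : K} (hlam : lam ≠ 0) :
    mixedEnergy (W.image (c + lam * ·)) (X.image (c + lam * ·)) (Y.image (c + lam * ·))
      (Z.image (c + lam * ·)) ξ = mixedEnergy W X Y Z ξ := by
  symm
  refine card_bij (fun q _ => (c + lam * q.1, c + lam * q.2.1, c + lam * q.2.2.1,
    c + lam * q.2.2.2)) ?_ ?_ ?_
  · rintro ⟨w, x, y, z⟩ hq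
    simp only [mem_filter, mem_product, mem_image] at hq ⊢
    obtain ⟨⟨hw, hx, hy, hz⟩, heq⟩ := hq
    exact ⟨⟨⟨w, hw, rfl⟩, ⟨x, hx, rfl⟩, ⟨y, hy, rfl⟩, ⟨z, hz, rfl⟩⟩,
      by linear_combination lam * heq⟩
  · rintro ⟨w, x, y, z⟩ _ ⟨w', x', y', z'⟩ _ h
    simpa [hlam] using h
  · rintro ⟨_, _, _, _⟩ hq
    simp only [mem_filter, mem_product, mem_image] at hq
    obtain ⟨⟨⟨w, hw, rfl⟩, ⟨x, hx, rfl⟩, ⟨y, hy, rfl⟩, ⟨z, hz, rfl⟩⟩, heq⟩ := hq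
    refine ⟨(w, x, y, z), ?_, rfl⟩
    simp only [mem_filter, mem_product]
    exact ⟨⟨hw, hx, hy, hz⟩, mul_left_cancel₀ hlam (by linear_combination heq)⟩

variable {A W X : Finset K}

lemma card_eq_of_affine (hW : ∃ c lam : K, lam ≠ 0 ∧ W = A.image (fun a => c + lam * a)) :
    #W = #A := by
  obtain ⟨c, lam, hlam, rfl⟩ := hW
  exact card_image_of_injective _ fun a b h => mul_left_cancel₀ hlam (add_left_cancel h)

lemma mixedEnergy_self_eq_of_affine (hW : ∃ c lam : K, lam ≠ 0 ∧ W = A.image (fun a => c + lam * a))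
    (ξ : K) : mixedEnergy W W W W ξ = mixedEnergy A A A A ξ := by
  obtain ⟨c, lam, hlam, rfl⟩ := hW
  exact mixedEnergy_image_affine A A A A ξ c hlam

lemma mixedEnergy_le_of_affine [Fintype K]
    (hW : ∃ c lam : K, lam ≠ 0 ∧ W = A.image (fun a => c + lam * a))
    (hX : ∃ c lam : K, lam ≠ 0 ∧ X = A.image (fun a => c + lam * a)) (ξ : K) :
    mixedEnergy W X W X ξ ≤ mixedEnergy A A A A ξ := by
  have h := mixedEnergy_sq_le W X ξ
  rw [mixedEnergy_self_eq_of_affine hW, mixedEnergy_self_eq_of_affine hX, ← sq] at h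
  exact le_of_pow_le_pow_left₀ two_ne_zero (Nat.zero_le _) h

lemma card_diffProd_ratio_fiber_le (A B C D : Finset K) (ξ : K) :
    #{q ∈ (A ×ˢ B ×ˢ C ×ˢ D) ×ˢ (A ×ˢ B ×ˢ C ×ˢ D) |
        diffProd q.1 = diffProd q.2 ∧ diffProd q.1 ≠ 0 ∧ (q.1.1 - q.1.2.1) / (q.2.1 - q.2.2.1) = ξ}
      ≤ mixedEnergy A B A B ξ * mixedEnergy C D C D ξ := by
  rw [mixedEnergy, mixedEnergy, ← card_product]
  refine card_le_card_of_injOn (fun q => ((q.1.1, q.1.2.1, q.2.1, q.2.2.1),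
    (q.2.2.2.1, q.2.2.2.2, q.1.2.2.1, q.1.2.2.2))) ?_ ?_
  · rintro ⟨⟨a, b, c, d⟩, a', b', c', d'⟩ hq
    simp only [mem_coe, mem_filter, mem_product] at hq ⊢
    simp only [diffProd] at hq
    obtain ⟨⟨⟨ha, hb, hc, hd⟩, ha', hb', hc', hd'⟩, heq, hne, rfl⟩ := hq
    have hab' : a' - b' ≠ 0 := left_ne_zero_of_mul (heq ▸ hne)
    have hab : a - b = (a - b) / (a' - b') * (a' - b') := (div_mul_cancel₀ _ hab').symm
    refine ⟨⟨⟨ha, hb, ha', hb'⟩, hab⟩, ⟨hc', hd', hc, hd⟩, mul_left_cancel₀ hab' ?_⟩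
    linear_combination (c - d) * hab - heq
  · rintro ⟨⟨a, b, c, d⟩, a', b', c', d'⟩ _ ⟨⟨e, f, g, h⟩, e', f', g', h'⟩ _ heq
    simp only [Prod.mk.injEq] at heq ⊢
    tauto

lemma card_diffProd_ne_zero_le [Fintype K] (A B C D : Finset K) :
    #{q ∈ {q ∈ (A ×ˢ B ×ˢ C ×ˢ D) ×ˢ (A ×ˢ B ×ˢ C ×ˢ D) | diffProd q.1 = diffProd q.2} |
        diffProd q.1 ≠ 0}
      ≤ ∑ ξ ∈ univ.filter (· ≠ 0), mixedEnergy A B A B ξ * mixedEnergy C D C D ξ := by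
  rw [card_eq_sum_card_fiberwise (f := fun q => (q.1.1 - q.1.2.1) / (q.2.1 - q.2.2.1)) ?_]
  · refine sum_le_sum fun ξ _ => ?_
    rw [filter_filter, filter_filter]
    exact card_diffProd_ratio_fiber_le A B C D ξ
  · rintro ⟨⟨a, b, c, d⟩, a', b', c', d'⟩ hq
    simp only [mem_coe, mem_filter, mem_univ, true_and] at hq ⊢
    simp only [diffProd] at hq
    obtain ⟨⟨_, heq⟩, hne⟩ := hq
    exact div_ne_zero (left_ne_zero_of_mul hne) (left_ne_zero_of_mul (heq ▸ hne))

end Field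

theorem stmt8 {p : ℕ} [Fact p.Prime] (A B C D : Finset (ZMod p))
    (hB : ∃ c lam : ZMod p, lam ≠ 0 ∧ B = A.image (fun a => c + lam * a))
    (hC : ∃ c lam : ZMod p, lam ≠ 0 ∧ C = A.image (fun a => c + lam * a))
    (hD : ∃ c lam : ZMod p, lam ≠ 0 ∧ D = A.image (fun a => c + lam * a)) :
    (((A ×ˢ B ×ˢ C ×ˢ D) ×ˢ (A ×ˢ B ×ˢ C ×ˢ D)).filter
        (fun q => (q.1.1 - q.1.2.1) * (q.1.2.2.1 - q.1.2.2.2) =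
          (q.2.1 - q.2.2.1) * (q.2.2.2.1 - q.2.2.2.2))).card
      ≤ 8 * A.card ^ 6 +
        ∑ ξ ∈ (univ : Finset (ZMod p)).filter (· ≠ 0), (addEnergy A ξ) ^ 2 := by
  have hA : ∃ c lam : ZMod p, lam ≠ 0 ∧ A = A.image (fun a => c + lam * a) :=
    ⟨0, 1, one_ne_zero, by simp⟩
  change #{q ∈ (A ×ˢ B ×ˢ C ×ˢ D) ×ˢ (A ×ˢ B ×ˢ C ×ˢ D) | diffProd q.1 = diffProd q.2} ≤ _
  rw [← card_filter_add_card_filter_not (fun q => diffProd q.1 = 0)]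
  refine add_le_add ?_ ((card_diffProd_ne_zero_le A B C D).trans (sum_le_sum fun ξ _ => ?_))
  · have hzero := card_diffProd_eq_zero_le A B C D
    rw [card_eq_of_affine hB, card_eq_of_affine hC, card_eq_of_affine hD] at hzero
    calc _ = #{t ∈ A ×ˢ B ×ˢ C ×ˢ D | diffProd t = 0} ^ 2 := card_filter_fiber_sq _ _ _
      _ ≤ (2 * #A ^ 3) ^ 2 := Nat.pow_le_pow_left (by linarith) 2
      _ ≤ 8 * #A ^ 6 := by ring_nf; linarith [Nat.zero_le (#A ^ 6)]
  · rw [sq]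
    exact Nat.mul_le_mul (mixedEnergy_le_of_affine hA hB ξ) (mixedEnergy_le_of_affine hC hD ξ)
end
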